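/- arXiv:2106.03498 — 7 statements merged into one kernel-verified Lean document; each statement's English description precedes it below -/
import Mathlib

section
/- Let S be a finite set, γ ∈ [0,1), and for each s ∈ S let μ_s be a probability measure on S (a weighted average over actions and transitions). If g : S → ℝ satisfies exp(g(s)) = Σ_{s'} μ_s(s') · exp(γ g(s')) for all s ∈ S, then g ≡ 0. -/
theorem stmt_0 {S : Type*} [Fintype S] [Nonempty S]
    (γ : ℝ) (hγ0 : 0 ≤ γ) (hγ1 : γ < 1)
    (μ : S → S → ℝ) (hμ0 : ∀ s s', 0 ≤ μ s s') (hμ1 : ∀ s, ∑ s', μ s s' = 1)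
    (g : S → ℝ)
    (hg : ∀ s, Real.exp (g s) = ∑ s', μ s s' * Real.exp (γ * g s')) :
    ∀ s, g s = 0 := by
  obtain ⟨s₀, -, hmax⟩ := Finset.exists_max_image Finset.univ g ⟨Classical.arbitrary S, Finset.mem_univ _⟩
  obtain ⟨s₁, -, hmin⟩ := Finset.exists_min_image Finset.univ g ⟨Classical.arbitrary S, Finset.mem_univ _⟩
  have hmax' : g s₀ ≤ 0 := by
    have h1 : Real.exp (g s₀) ≤ Real.exp (γ * g s₀) := by
      rw [hg s₀]
      calc ∑ s', μ s₀ s' * Real.exp (γ * g s')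
          ≤ ∑ s', μ s₀ s' * Real.exp (γ * g s₀) := by
            apply Finset.sum_le_sum
            intro i _
            exact mul_le_mul_of_nonneg_left
              (Real.exp_le_exp.mpr (mul_le_mul_of_nonneg_left (hmax i (Finset.mem_univ i)) hγ0))
              (hμ0 s₀ i)
        _ = Real.exp (γ * g s₀) := by rw [← Finset.sum_mul, hμ1 s₀, one_mul]
    have h2 : g s₀ ≤ γ * g s₀ := Real.exp_le_exp.mp h1
    nlinarith
  have hmin' : 0 ≤ g s₁ := by
    have h1 : Real.exp (γ * g s₁) ≤ Real.exp (g s₁) := by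
      rw [hg s₁]
      calc Real.exp (γ * g s₁) = ∑ s', μ s₁ s' * Real.exp (γ * g s₁) := by
            rw [← Finset.sum_mul, hμ1 s₁, one_mul]
        _ ≤ ∑ s', μ s₁ s' * Real.exp (γ * g s') := by
            apply Finset.sum_le_sum
            intro i _
            exact mul_le_mul_of_nonneg_left
              (Real.exp_le_exp.mpr (mul_le_mul_of_nonneg_left (hmin i (Finset.mem_univ i)) hγ0))
              (hμ0 s₁ i)
    have h2 : γ * g s₁ ≤ g s₁ := Real.exp_le_exp.mp h1
    nlinarith
  intro s
  have := hmax s (Finset.mem_univ s)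
  have := hmin s (Finset.mem_univ s)
  linarith
end

section
/- Let S be a finite set, γ ∈ [0,1), and for each s let μ_s be a probability measure on S. If g : S → ℝ satisfies exp(g(s)) = Σ_{s'} μ_s(s') exp(γ g(s')) for all s, then g(s) ≥ 0 for all s. (Lower-bound half of the fixed-point uniqueness argument, via Jensen's inequality applied at a minimizer of g.) -/
theorem stmt_1 {S : Type*} [Fintype S] [Nonempty S]
    (γ : ℝ) (hγ0 : 0 ≤ γ) (hγ1 : γ < 1)
    (μ : S → S → ℝ) (hμ0 : ∀ s s', 0 ≤ μ s s') (hμ1 : ∀ s, ∑ s', μ s s' = 1)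
    (g : S → ℝ)
    (hg : ∀ s, Real.exp (g s) = ∑ s', μ s s' * Real.exp (γ * g s')) :
    ∀ s, 0 ≤ g s := by
  obtain ⟨s₀, hs₀⟩ := Finite.exists_min g
  have key : Real.exp (γ * g s₀) ≤ Real.exp (g s₀) := by
    rw [hg s₀]
    calc Real.exp (γ * g s₀) = ∑ s', μ s₀ s' * Real.exp (γ * g s₀) := by
          rw [← Finset.sum_mul, hμ1, one_mul]
      _ ≤ ∑ s', μ s₀ s' * Real.exp (γ * g s') := by
          apply Finset.sum_le_sum
          intro i _
          exact mul_le_mul_of_nonneg_left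
            (Real.exp_le_exp.2 (mul_le_mul_of_nonneg_left (hs₀ i) hγ0)) (hμ0 s₀ i)
  have h1 : γ * g s₀ ≤ g s₀ := Real.exp_le_exp.1 key
  have h0 : 0 ≤ g s₀ := by nlinarith
  exact fun s => le_trans h0 (hs₀ s)
end

section
/- Let S be a finite set, γ ∈ [0,1), and for each s let μ_s be a probability measure on S. If g : S → ℝ satisfies exp(g(s)) = Σ_{s'} μ_s(s') exp(γ g(s')) for all s, then g(s) ≤ 0 for all s. (Upper-bound half, via Jensen at a maximizer of g.) -/
theorem stmt_2 {S : Type*} [Fintype S] [Nonempty S]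
    (γ : ℝ) (hγ0 : 0 ≤ γ) (hγ1 : γ < 1)
    (μ : S → S → ℝ) (hμ0 : ∀ s s', 0 ≤ μ s s') (hμ1 : ∀ s, ∑ s', μ s s' = 1)
    (g : S → ℝ)
    (hg : ∀ s, Real.exp (g s) = ∑ s', μ s s' * Real.exp (γ * g s')) :
    ∀ s, g s ≤ 0 := by
  obtain ⟨s₀, hs₀⟩ := Finite.exists_max g
  have key : Real.exp (g s₀) ≤ Real.exp (γ * g s₀) := by
    rw [hg s₀]
    calc ∑ s', μ s₀ s' * Real.exp (γ * g s')
        ≤ ∑ s', μ s₀ s' * Real.exp (γ * g s₀) := by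
          apply Finset.sum_le_sum
          intro i _
          exact mul_le_mul_of_nonneg_left
            (Real.exp_le_exp.mpr (mul_le_mul_of_nonneg_left (hs₀ i) hγ0)) (hμ0 s₀ i)
      _ = Real.exp (γ * g s₀) := by rw [← Finset.sum_mul, hμ1 s₀, one_mul]
  have h1 : g s₀ ≤ γ * g s₀ := Real.exp_le_exp.mp key
  have h2 : g s₀ ≤ 0 := by nlinarith
  exact fun s => le_trans (hs₀ s) h2
end

section
/- Let R ⊂ ℕ (positive integers) be closed under addition with gcd(R) = 1. Then there exist a, b ∈ R with gcd(a,b) = 1. -/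
/-!
Since `R` has gcd one, every sufficiently large natural number is a sum of elements of `R`
(the existence of the Frobenius number), and since `R` is closed under addition such a sum lies
in `R` itself. So `R` contains two consecutive numbers, and these are coprime.
-/

theorem AddSubmonoid.eq_zero_or_mem_of_mem_closure {M : Type*} [AddMonoid M] {S : Set M}
    (hadd : ∀ a ∈ S, ∀ b ∈ S, a + b ∈ S) {x : M} (hx : x ∈ AddSubmonoid.closure S) :
    x = 0 ∨ x ∈ S := by
  induction hx using AddSubmonoid.closure_induction with
  | mem y hy => exact .inr hy
  | zero => exact .inl rfl
  | add a b _ _ ha hb =>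
    rcases ha with rfl | ha
    · simpa using hb
    rcases hb with rfl | hb
    · simpa using Or.inr ha
    exact .inr (hadd a ha b hb)

theorem Nat.exists_forall_ge_mem_of_add_mem_of_setGcd_eq_one {S : Set ℕ}
    (hadd : ∀ a ∈ S, ∀ b ∈ S, a + b ∈ S) (hS : Nat.setGcd S = 1) :
    ∃ N, ∀ m ≥ N, m ∈ S := by
  obtain ⟨N, hN⟩ := Nat.exists_mem_closure_of_ge S
  refine ⟨N + 1, fun m hm => ?_⟩
  obtain hzero | hmem := AddSubmonoid.eq_zero_or_mem_of_mem_closure hadd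
    (hN m (by omega) (hS ▸ one_dvd m))
  · omega
  · exact hmem

theorem stmt_6_general (R : Set ℕ)
    (hadd : ∀ a ∈ R, ∀ b ∈ R, a + b ∈ R)
    (hgcd : ∀ d : ℕ, (∀ n ∈ R, d ∣ n) → d = 1) :
    ∃ a ∈ R, ∃ b ∈ R, Nat.gcd a b = 1 := by
  have hR : Nat.setGcd R = 1 := hgcd _ fun n hn => Nat.setGcd_dvd_of_mem hn
  obtain ⟨N, hN⟩ := Nat.exists_forall_ge_mem_of_add_mem_of_setGcd_eq_one hadd hR
  exact ⟨N, hN N le_rfl, N + 1, hN (N + 1) (Nat.le_succ N), by simp⟩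

theorem stmt_6 (R : Set ℕ) (hpos : ∀ n ∈ R, 0 < n)
    (hadd : ∀ a ∈ R, ∀ b ∈ R, a + b ∈ R)
    (hgcd : ∀ d : ℕ, (∀ n ∈ R, d ∣ n) → d = 1) :
    ∃ a ∈ R, ∃ b ∈ R, Nat.gcd a b = 1 :=
  stmt_6_general R hadd hgcd
end

section
/- Let R ⊂ ℕ be closed under addition, and let a, b ∈ R be coprime. Then every integer c ≥ ab belongs to R. -/
theorem stmt_7 (R : Set ℕ) (hpos : ∀ n ∈ R, 0 < n)
    (hadd : ∀ a ∈ R, ∀ b ∈ R, a + b ∈ R)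
    (a b : ℕ) (ha : a ∈ R) (hb : b ∈ R) (hab : Nat.gcd a b = 1) :
    ∀ c : ℕ, a * b ≤ c → c ∈ R := by
  have ha0 : 0 < a := hpos a ha
  have hb0 : 0 < b := hpos b hb
  -- multiples of elements of R are in R
  have smul : ∀ (m x : ℕ), 0 < m → x ∈ R → m * x ∈ R := by
    intro m x hm hx
    induction m with
    | zero => omega
    | succ k ih =>
      rcases Nat.eq_zero_or_pos k with hk | hk
      · simpa [hk] using hx
      · have := hadd _ (ih hk) _ hx
        simpa [Nat.succ_mul] using this
  intro c hc
  haveI : NeZero b := ⟨hb0.ne'⟩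
  -- find m < b with m*a ≡ c mod b
  have hunit : IsUnit (a : ZMod b) := by
    rw [ZMod.isUnit_iff_coprime]
    exact hab
  obtain ⟨u, hu⟩ := hunit
  set m : ℕ := (↑u⁻¹ * (c : ZMod b)).val with hm
  have hmlt : m < b := ZMod.val_lt _
  have hcong : ((m * a : ℕ) : ZMod b) = (c : ZMod b) := by
    push_cast
    rw [ZMod.natCast_val, ZMod.cast_id]
    rw [← hu, mul_comm, ← mul_assoc, Units.mul_inv, one_mul]
  have hma_le : m * a + a ≤ c := by
    have : (m + 1) * a ≤ b * a := Nat.mul_le_mul_right a hmlt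
    calc m * a + a = (m + 1) * a := by ring
    _ ≤ b * a := this
    _ = a * b := by ring
    _ ≤ c := hc
  have hdvd : b ∣ c - m * a := by
    have h0 : ((c - m * a : ℕ) : ZMod b) = 0 := by
      rw [Nat.cast_sub (by omega), hcong, sub_self]
    exact (ZMod.natCast_eq_zero_iff _ _).mp h0
  obtain ⟨n, hn⟩ := hdvd
  rw [mul_comm b n] at hn
  have hn1 : 0 < n := by
    rcases Nat.eq_zero_or_pos n with h | h
    · rw [h, zero_mul] at hn; omega
    · exact h
  have hc_eq : c = m * a + n * b := by omega
  rcases Nat.eq_zero_or_pos m with hm0 | hm0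
  · rw [hc_eq, hm0]
    simpa using smul n b hn1 hb
  · rw [hc_eq]
    exact hadd _ (smul m a hm0 ha) _ (smul n b hn1 hb)
end

section
/- In Theorem 2 (two-environment identification): Suppose (γ,T) and (γ̃,T̃) form a value-distinguishing pair of MDPs on finite S, A, meaning any solution (w,w̃) of w(s) − γ Σ_{s'} T(s'|s,a) w(s') = w̃(s) − γ̃ Σ_{s'} T̃(s'|s,a) w̃(s') for all s,a has w or w̃ constant. If (v₁,ṽ₁) and (v₂,ṽ₂) both solve λ log(π(a|s)/π̃(a|s)) = γΣ_{s'}T(s'|s,a)v(s') − γ̃Σ_{s'}T̃(s'|s,a)ṽ(s') − (v(s) − ṽ(s)) for all s,a, and additionally γ,γ̃ ∈ [0,1), then v₁ − v₂ is a constant function. -/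
/-!
Subtracting the two solutions cancels the policy term, so `(v₁ - v₂, ṽ₁ - ṽ₂)` solves the
homogeneous system and value-distinction makes one of the two differences constant. If it is
`ṽ₁ - ṽ₂`, then `w = v₁ - v₂` satisfies `w - γ P w = const` for the stochastic matrix
`P = T(· | ·, a)`; comparing this equation at a maximiser and at a minimiser of `w` gives
`(1 - γ) max w ≤ const ≤ (1 - γ) min w`, so `w` is constant because `γ < 1`.
-/

open Finset

section Stochastic

variable {S : Type*} [Fintype S] {P : S → S → ℝ}

lemma sum_mul_const_of_sum_eq_one (hP1 : ∀ s, ∑ s', P s s' = 1) (s : S) (c : ℝ) :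
    ∑ s', P s s' * c = c := by
  rw [← sum_mul, hP1, one_mul]

lemma sum_mul_le_of_forall_le (hP0 : ∀ s s', 0 ≤ P s s') (hP1 : ∀ s, ∑ s', P s s' = 1)
    {f : S → ℝ} {M : ℝ} (hf : ∀ s', f s' ≤ M) (s : S) :
    ∑ s', P s s' * f s' ≤ M :=
  calc ∑ s', P s s' * f s' ≤ ∑ s', P s s' * M :=
        sum_le_sum fun s' _ => mul_le_mul_of_nonneg_left (hf s') (hP0 s s')
    _ = M := sum_mul_const_of_sum_eq_one hP1 s M

lemma le_sum_mul_of_forall_le (hP0 : ∀ s s', 0 ≤ P s s') (hP1 : ∀ s, ∑ s', P s s' = 1)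
    {f : S → ℝ} {m : ℝ} (hf : ∀ s', m ≤ f s') (s : S) :
    m ≤ ∑ s', P s s' * f s' :=
  calc m = ∑ s', P s s' * m := (sum_mul_const_of_sum_eq_one hP1 s m).symm
    _ ≤ ∑ s', P s s' * f s' :=
        sum_le_sum fun s' _ => mul_le_mul_of_nonneg_left (hf s') (hP0 s s')

theorem exists_eq_const_of_sub_discounted_eq_const [Nonempty S] {γ : ℝ} (hγ0 : 0 ≤ γ)
    (hγ1 : γ < 1) (hP0 : ∀ s s', 0 ≤ P s s') (hP1 : ∀ s, ∑ s', P s s' = 1)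
    {f : S → ℝ} {k : ℝ} (hf : ∀ s, f s - γ * ∑ s', P s s' * f s' = k) :
    ∃ c, ∀ s, f s = c := by
  obtain ⟨sM, -, hM⟩ := exists_max_image univ f univ_nonempty
  obtain ⟨sm, -, hm⟩ := exists_min_image univ f univ_nonempty
  have hmax : (1 - γ) * f sM ≤ k := by
    have := sum_mul_le_of_forall_le hP0 hP1 (fun s' => hM s' (mem_univ s')) sM
    nlinarith [hf sM]
  have hmin : k ≤ (1 - γ) * f sm := by
    have := le_sum_mul_of_forall_le hP0 hP1 (fun s' => hm s' (mem_univ s')) sm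
    nlinarith [hf sm]
  have hMm : f sM ≤ f sm := le_of_mul_le_mul_left (hmax.trans hmin) (sub_pos.2 hγ1)
  exact ⟨f sm, fun s => le_antisymm ((hM s (mem_univ s)).trans hMm) (hm s (mem_univ s))⟩

end Stochastic

lemma sub_solves_homogeneous {S A : Type*} [Fintype S] {γ γ' : ℝ} {T T' : S → A → S → ℝ}
    {r : S → A → ℝ} {v₁ vt₁ v₂ vt₂ : S → ℝ}
    (h₁ : ∀ s a, r s a =
      γ * (∑ s', T s a s' * v₁ s') - γ' * (∑ s', T' s a s' * vt₁ s') - (v₁ s - vt₁ s))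
    (h₂ : ∀ s a, r s a =
      γ * (∑ s', T s a s' * v₂ s') - γ' * (∑ s', T' s a s' * vt₂ s') - (v₂ s - vt₂ s))
    (s : S) (a : A) :
    (v₁ - v₂) s - γ * ∑ s', T s a s' * (v₁ - v₂) s' =
      (vt₁ - vt₂) s - γ' * ∑ s', T' s a s' * (vt₁ - vt₂) s' := by
  simp only [Pi.sub_apply, mul_sub, sum_sub_distrib]
  linarith [h₁ s a, h₂ s a]

theorem stmt_16_general {S A : Type*} [Fintype S] [Nonempty S] [Fintype A] [Nonempty A]
    (lam γ γ' : ℝ)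
    (hγ0 : 0 ≤ γ) (hγ1 : γ < 1)
    (T T' : S → A → S → ℝ)
    (hT0 : ∀ s a s', 0 ≤ T s a s') (hT1 : ∀ s a, ∑ s', T s a s' = 1)
    (hT'1 : ∀ s a, ∑ s', T' s a s' = 1)
    (pi pi' : S → A → ℝ)
    (hVD : ∀ w w' : S → ℝ,
      (∀ s a, w s - γ * ∑ s', T s a s' * w s' = w' s - γ' * ∑ s', T' s a s' * w' s') →
      ((∃ c, ∀ s, w s = c) ∨ (∃ c, ∀ s, w' s = c)))
    (v₁ vt₁ v₂ vt₂ : S → ℝ)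
    (h₁ : ∀ s a, lam * Real.log (pi s a / pi' s a) =
      γ * (∑ s', T s a s' * v₁ s') - γ' * (∑ s', T' s a s' * vt₁ s') - (v₁ s - vt₁ s))
    (h₂ : ∀ s a, lam * Real.log (pi s a / pi' s a) =
      γ * (∑ s', T s a s' * v₂ s') - γ' * (∑ s', T' s a s' * vt₂ s') - (v₂ s - vt₂ s)) :
    ∃ c : ℝ, ∀ s, v₁ s - v₂ s = c := by
  have homog := sub_solves_homogeneous h₁ h₂
  rcases hVD _ _ homog with hw | ⟨c, hc⟩
  · exact hw
  · let a : A := Classical.arbitrary A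
    refine exists_eq_const_of_sub_discounted_eq_const (P := fun s => T s a) (k := c * (1 - γ'))
      hγ0 hγ1 (fun s => hT0 s a) (fun s => hT1 s a) fun s => ?_
    have hsum : ∑ s', T' s a s' * (vt₁ - vt₂) s' = c := by
      simp only [hc, sum_mul_const_of_sum_eq_one (fun s => hT'1 s a)]
    have hs := homog s a
    rw [hc s, hsum] at hs
    simp only [Pi.sub_apply] at hs
    linear_combination hs

theorem stmt_16 {S A : Type*} [Fintype S] [Nonempty S] [Fintype A] [Nonempty A]
    (lam γ γ' : ℝ) (hlam : 0 < lam)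
    (hγ0 : 0 ≤ γ) (hγ1 : γ < 1) (hγ'0 : 0 ≤ γ') (hγ'1 : γ' < 1)
    (T T' : S → A → S → ℝ)
    (hT0 : ∀ s a s', 0 ≤ T s a s') (hT1 : ∀ s a, ∑ s', T s a s' = 1)
    (hT'0 : ∀ s a s', 0 ≤ T' s a s') (hT'1 : ∀ s a, ∑ s', T' s a s' = 1)
    (pi pi' : S → A → ℝ)
    (hpipos : ∀ s a, 0 < pi s a) (hpi'pos : ∀ s a, 0 < pi' s a)
    (hVD : ∀ w w' : S → ℝ,
      (∀ s a, w s - γ * ∑ s', T s a s' * w s' = w' s - γ' * ∑ s', T' s a s' * w' s') →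
      ((∃ c, ∀ s, w s = c) ∨ (∃ c, ∀ s, w' s = c)))
    (v₁ vt₁ v₂ vt₂ : S → ℝ)
    (h₁ : ∀ s a, lam * Real.log (pi s a / pi' s a) =
      γ * (∑ s', T s a s' * v₁ s') - γ' * (∑ s', T' s a s' * vt₁ s') - (v₁ s - vt₁ s))
    (h₂ : ∀ s a, lam * Real.log (pi s a / pi' s a) =
      γ * (∑ s', T s a s' * v₂ s') - γ' * (∑ s', T' s a s' * vt₂ s') - (v₂ s - vt₂ s)) :
    ∃ c : ℝ, ∀ s, v₁ s - v₂ s = c :=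
  stmt_16_general lam γ γ' hγ0 hγ1 T T' hT0 hT1 hT'1 pi pi' hVD v₁ vt₁ v₂ vt₂ h₁ h₂
end

section
/- Reward-decomposability implies identifiability (deterministic case): Let an MDP on finite S with deterministic 0–1 transition matrices 𝕋(a) be reward-decomposable, i.e., the transitive closure of the one-step-linked relation connects all states. Then the set ∩_{a∈A} ker(𝕋(a) − 𝕋(a₀)) equals the span of the all-ones vector. -/
theorem stmt_18 {N : ℕ} {A : Type*} [Fintype A] (a₀ : A)
    (Tm : A → Matrix (Fin N) (Fin N) ℝ)
    (hdet : ∀ a i, ∃ j, ∀ k, Tm a i k = if k = j then 1 else 0)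
    (hdecomp : ∀ j k : Fin N, Relation.EqvGen
      (fun j k => ∃ (s₀ : Fin N) (a a' : A), Tm a s₀ j = 1 ∧ Tm a' s₀ k = 1) j k) :
    ∀ υ : Fin N → ℝ, (∀ a, (Tm a - Tm a₀).mulVec υ = 0) ↔ ∃ c : ℝ, υ = fun _ => c := by
  intro υ
  have hrow : ∀ (a : A) (i j : Fin N), Tm a i j = 1 → (Tm a).mulVec υ i = υ j := by
    intro a i j hij
    obtain ⟨j', hj'⟩ := hdet a i
    have : j = j' := by
      by_contra hne
      rw [hj' j, if_neg hne] at hij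
      norm_num at hij
    subst this
    simp only [Matrix.mulVec, dotProduct]
    calc ∑ k, Tm a i k * υ k = ∑ k, (if k = j then 1 else 0) * υ k := by
          simp_rw [hj']
      _ = υ j := by simp
  constructor
  · intro h
    have heq : ∀ (a : A) (i : Fin N), (Tm a).mulVec υ i = (Tm a₀).mulVec υ i := by
      intro a i
      have := congrFun (h a) i
      simpa [Matrix.sub_mulVec, sub_eq_zero] using congrFun (h a) i
    have hconst : ∀ j k : Fin N, υ j = υ k := by
      intro j k
      induction hdecomp j k with
      | rel x y hxy =>
        obtain ⟨s₀, a, a', hx, hy⟩ := hxy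
        rw [← hrow a s₀ x hx, ← hrow a' s₀ y hy, heq a s₀, heq a' s₀]
      | refl x => rfl
      | symm x y _ ih => exact ih.symm
      | trans x y z _ _ ih1 ih2 => exact ih1.trans ih2
    rcases Nat.eq_zero_or_pos N with hN | hN
    · subst hN
      exact ⟨0, funext fun i => i.elim0⟩
    · exact ⟨υ ⟨0, hN⟩, funext fun i => hconst i ⟨0, hN⟩⟩
  · rintro ⟨c, rfl⟩ a
    funext i
    obtain ⟨j, hj⟩ := hdet a i
    obtain ⟨j₀, hj₀⟩ := hdet a₀ i
    have h1 : (Tm a).mulVec (fun _ => c) i = c := hrow a i j (by rw [hj j]; simp)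
    have h2 : (Tm a₀).mulVec (fun _ => c) i = c := hrow a₀ i j₀ (by rw [hj₀ j₀]; simp)
    simp [Matrix.sub_mulVec, h1, h2]
end
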